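/- Let H be a subgroup of G and V a twisted Yetter–Drinfeld module over (H,ω|_H). Then I(V) = kG⊗V modulo the relations gh⊗v_d = τ(g,h)(d)⁻¹ g⊗(h·v_d) (for g ∈ G, h,d ∈ H), with G-grading deg(g⊗v_d) = gdg⁻¹ and action k·(g⊗v_d) = τ(k,g)(d)·(kg⊗v_d) for k ∈ G, is a well-defined twisted Yetter–Drinfeld module over (G,ω): the grading squares with the coaction, the action respects the relations, g·(I(V))_d ⊆ (I(V))_{gdg⁻¹}, and h·(k·x) = τ(h,k)(d)·(hk·x) for x ∈ (I(V))_d. -/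

import Mathlib

open scoped TensorProduct

namespace DW

/-! ### Cocycle combinatorics -/

section Cocycle

variable {G : Type*} [Group G] {M : Type*} [CommGroup M]

/-- The 3-cocycle condition for a function `ω : G³ → M`. -/
def IsCocycle (ω : G → G → G → M) : Prop :=
  ∀ a b c d : G, ω (a * b) c d * ω a b (c * d) = ω a b c * ω a (b * c) d * ω b c d

/-- `ω` is normalized if it takes the value `1` whenever an argument is `1`. -/
def IsNormalized (ω : G → G → G → M) : Prop :=
  ∀ a b c : G, a = 1 ∨ b = 1 ∨ c = 1 → ω a b c = 1

/-- `τ(h,k)(d) = ω(h,k,d)·ω(hkd(hk)⁻¹,h,k)/ω(h,kdk⁻¹,k)`. -/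
def tauc (ω : G → G → G → M) (h k d : G) : M :=
  ω h k d * ω (h * k * d * (h * k)⁻¹) h k * (ω h (k * d * k⁻¹) k)⁻¹

/-- `γ(h)(d,f) = ω(h,d,f)·ω(hdh⁻¹,hfh⁻¹,h)/ω(hdh⁻¹,h,f)`. -/
def gamc (ω : G → G → G → M) (h d f : G) : M :=
  ω h d f * ω (h * d * h⁻¹) (h * f * h⁻¹) h * (ω (h * d * h⁻¹) h f)⁻¹

end Cocycle

/-! ### Twisted Yetter–Drinfeld modules -/

/-- A twisted Yetter–Drinfeld module structure over `(G, ω)` on a `k`-vector space `M`: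
a `G`-grading (given internally by submodules) together with a twisted `G`-action. -/
structure YDOn (k : Type*) [Field k] {G : Type*} [Group G] [DecidableEq G]
    (ω : G → G → G → kˣ) (M : Type*) [AddCommGroup M] [Module k M] where
  grading : G → Submodule k M
  internal : DirectSum.IsInternal grading
  act : G → M →ₗ[k] M
  act_one : act 1 = LinearMap.id
  act_mem : ∀ (g d : G), ∀ v ∈ grading d, act g v ∈ grading (g * d * g⁻¹)
  act_act : ∀ (h g d : G), ∀ v ∈ grading d,
    act h (act g v) = ((tauc ω h g d : kˣ) : k) • act (h * g) v

section YD

variable {k : Type*} [Field k] {G : Type*} [Group G] [DecidableEq G] {ω : G → G → G → kˣ}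

/-- Morphisms of twisted Yetter–Drinfeld modules: grading-preserving and `G`-equivariant. -/
def IsYDHom {M N : Type*} [AddCommGroup M] [Module k M] [AddCommGroup N] [Module k N]
    (S : YDOn k ω M) (T : YDOn k ω N) (f : M →ₗ[k] N) : Prop :=
  (∀ d : G, ∀ v ∈ S.grading d, f v ∈ T.grading d) ∧
  ∀ g : G, f ∘ₗ S.act g = T.act g ∘ₗ f

/-- `θ` is the ribbon twist map, i.e. `θ(v_d) = d·v_d` on homogeneous elements. -/
def IsTwistMap {M : Type*} [AddCommGroup M] [Module k M] (S : YDOn k ω M)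
    (θ : M →ₗ[k] M) : Prop :=
  ∀ d : G, ∀ v ∈ S.grading d, θ v = S.act d v

/-- `T` is the tensor-product Yetter–Drinfeld structure on `V ⊗ W`:
grading `(V⊗W)_d = ⊕_{ab=d} V_a ⊗ W_b`, action `h·(v_a⊗w_b) = γ(h)(a,b) (h·v ⊗ h·w)`. -/
def IsTensorStruct {V W : Type*} [AddCommGroup V] [Module k V] [AddCommGroup W] [Module k W]
    (SV : YDOn k ω V) (SW : YDOn k ω W) (T : YDOn k ω (V ⊗[k] W)) : Prop :=
  (∀ d : G, T.grading d =
      ⨆ a : G, Submodule.map₂ (TensorProduct.mk k V W) (SV.grading a) (SW.grading (a⁻¹ * d))) ∧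
  ∀ (h a b : G) (v : V) (w : W), v ∈ SV.grading a → w ∈ SW.grading b →
    T.act h (v ⊗ₜ[k] w) = ((gamc ω h a b : kˣ) : k) • (SV.act h v ⊗ₜ[k] SW.act h w)

/-- `c` is the braiding `c_{V,W}(v_g ⊗ w) = (g·w) ⊗ v_g`. -/
def IsBraidingMap {V W : Type*} [AddCommGroup V] [Module k V] [AddCommGroup W] [Module k W]
    (SV : YDOn k ω V) (SW : YDOn k ω W) (c : V ⊗[k] W →ₗ[k] W ⊗[k] V) : Prop :=
  ∀ (g : G) (v : V) (w : W), v ∈ SV.grading g → c (v ⊗ₜ[k] w) = SW.act g w ⊗ₜ[k] v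

/-- `a` is the associator `α((u_g⊗v_h)⊗w_l) = ω(g,h,l)⁻¹ u⊗(v⊗w)`. -/
def IsAssocMap {U V W : Type*} [AddCommGroup U] [Module k U] [AddCommGroup V] [Module k V]
    [AddCommGroup W] [Module k W]
    (SU : YDOn k ω U) (SV : YDOn k ω V) (SW : YDOn k ω W)
    (a : (U ⊗[k] V) ⊗[k] W →ₗ[k] U ⊗[k] (V ⊗[k] W)) : Prop :=
  ∀ (g h l : G) (u : U) (v : V) (w : W),
    u ∈ SU.grading g → v ∈ SV.grading h → w ∈ SW.grading l →
    a ((u ⊗ₜ[k] v) ⊗ₜ[k] w) = (((ω g h l)⁻¹ : kˣ) : k) • (u ⊗ₜ[k] (v ⊗ₜ[k] w))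

/-- `a` is the inverse associator `α⁻¹(u_g⊗(v_h⊗w_l)) = ω(g,h,l) (u⊗v)⊗w`. -/
def IsAssocInvMap {U V W : Type*} [AddCommGroup U] [Module k U] [AddCommGroup V] [Module k V]
    [AddCommGroup W] [Module k W]
    (SU : YDOn k ω U) (SV : YDOn k ω V) (SW : YDOn k ω W)
    (a : U ⊗[k] (V ⊗[k] W) →ₗ[k] (U ⊗[k] V) ⊗[k] W) : Prop :=
  ∀ (g h l : G) (u : U) (v : V) (w : W),
    u ∈ SU.grading g → v ∈ SV.grading h → w ∈ SW.grading l →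
    a (u ⊗ₜ[k] (v ⊗ₜ[k] w)) = ((ω g h l : kˣ) : k) • ((u ⊗ₜ[k] v) ⊗ₜ[k] w)

/-- The unit object: `k` concentrated in degree `1` with trivial action. -/
def IsUnitStruct (S : YDOn k ω k) : Prop :=
  S.grading 1 = ⊤ ∧ (∀ d : G, d ≠ 1 → S.grading d = ⊥) ∧ ∀ g : G, S.act g = LinearMap.id

end YD

/-! ### The induction functor -/

section Induced

variable {k : Type*} [Field k] {G : Type*} [Group G] [DecidableEq G]
variable (ω : G → G → G → kˣ) (H : Subgroup G)

/-- Restriction of a 3-cocycle on `G` to a subgroup `H`. -/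
def resCocycle : ↥H → ↥H → ↥H → kˣ := fun a b c => ω ↑a ↑b ↑c

variable {V : Type*} [AddCommGroup V] [Module k V]

/-- The relations `g h ⊗ v_d = τ(g,h)(d)⁻¹ g ⊗ (h·v_d)` defining `I(V) = kG ⊗_{kH} V`. -/
noncomputable def indRel (S : YDOn k (resCocycle ω H) V) : Submodule k (G →₀ V) :=
  Submodule.span k
    {x | ∃ (g : G) (h d : ↥H) (v : V), v ∈ S.grading d ∧
      x = Finsupp.single (g * ↑h) v
        - (((tauc ω g ↑h ↑d)⁻¹ : kˣ) : k) • Finsupp.single g (S.act h v)}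

/-- The carrier of the induced module `I(V)`. -/
abbrev IndCarrier (S : YDOn k (resCocycle ω H) V) : Type _ :=
  (G →₀ V) ⧸ indRel ω H S

/-- The generator `g ⊗ v` of `I(V)`. -/
noncomputable def jgen (S : YDOn k (resCocycle ω H) V) (g : G) (v : V) : IndCarrier ω H S :=
  Submodule.Quotient.mk (Finsupp.single g v)

/-- `T` is the twisted Yetter–Drinfeld structure of the induced module `I(V)`:
`deg (g⊗v_e) = g e g⁻¹` and `c ⊳ (g⊗v_e) = τ(c,g)(e) (cg ⊗ v_e)`. -/
def IsIndStruct (S : YDOn k (resCocycle ω H) V) (T : YDOn k ω (IndCarrier ω H S)) : Prop :=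
  (∀ d : G, T.grading d = Submodule.span k
      {x | ∃ (g : G) (e : ↥H) (v : V), v ∈ S.grading e ∧ g * ↑e * g⁻¹ = d ∧
        x = jgen ω H S g v}) ∧
  ∀ (c g : G) (e : ↥H) (v : V), v ∈ S.grading e →
    T.act c (jgen ω H S g v) = ((tauc ω c g ↑e : kˣ) : k) • jgen ω H S (c * g) v

/-- `F` is the induced morphism `I(f)` of a morphism `f`. -/
def IsIndMap {W : Type*} [AddCommGroup W] [Module k W]
    (S : YDOn k (resCocycle ω H) V) (S' : YDOn k (resCocycle ω H) W)
    (f : V →ₗ[k] W) (F : IndCarrier ω H S →ₗ[k] IndCarrier ω H S') : Prop :=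
  ∀ (g : G) (v : V), F (jgen ω H S g v) = jgen ω H S' g (f v)

/-- `ν` is the oplax structure map
`ν(g ⊗ (a_d ⊗ b_f)) = γ(g)(d,f) (g⊗a) ⊗ (g⊗b)`. -/
def IsNuMap {A B : Type*} [AddCommGroup A] [Module k A] [AddCommGroup B] [Module k B]
    (SA : YDOn k (resCocycle ω H) A) (SB : YDOn k (resCocycle ω H) B)
    (SAB : YDOn k (resCocycle ω H) (A ⊗[k] B))
    (ν : IndCarrier ω H SAB →ₗ[k] IndCarrier ω H SA ⊗[k] IndCarrier ω H SB) : Prop :=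
  ∀ (g : G) (d f : ↥H) (a : A) (b : B), a ∈ SA.grading d → b ∈ SB.grading f →
    ν (jgen ω H SAB g (a ⊗ₜ[k] b)) =
      ((gamc ω g ↑d ↑f : kˣ) : k) • (jgen ω H SA g a ⊗ₜ[k] jgen ω H SB g b)

/-- `μ` is the lax structure map: zero across distinct cosets and
`μ((g⊗a_d) ⊗ (g⊗b_f)) = γ(g)(d,f)⁻¹ (g ⊗ (a⊗b))`. -/
def IsMuMap {A B : Type*} [AddCommGroup A] [Module k A] [AddCommGroup B] [Module k B]
    (SA : YDOn k (resCocycle ω H) A) (SB : YDOn k (resCocycle ω H) B)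
    (SAB : YDOn k (resCocycle ω H) (A ⊗[k] B))
    (μ : IndCarrier ω H SA ⊗[k] IndCarrier ω H SB →ₗ[k] IndCarrier ω H SAB) : Prop :=
  (∀ g g' : G, g⁻¹ * g' ∉ H → ∀ (a : A) (b : B),
      μ (jgen ω H SA g a ⊗ₜ[k] jgen ω H SB g' b) = 0) ∧
  ∀ (g : G) (d f : ↥H) (a : A) (b : B), a ∈ SA.grading d → b ∈ SB.grading f →
    μ (jgen ω H SA g a ⊗ₜ[k] jgen ω H SB g b) =
      (((gamc ω g ↑d ↑f)⁻¹ : kˣ) : k) • jgen ω H SAB g (a ⊗ₜ[k] b)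

/-- The counit `I(1) → 1`, `g ⊗ c ↦ c`. -/
def IsCounitMap (S1 : YDOn k (resCocycle ω H) k)
    (ε : IndCarrier ω H S1 →ₗ[k] k) : Prop :=
  ∀ (g : G) (c : k), ε (jgen ω H S1 g c) = c

/-- The unit `1 → I(1)`, `1 ↦ ∑ᵢ gᵢ ⊗ 1` over a set `R` of left coset representatives. -/
def IsUnitMap (S1 : YDOn k (resCocycle ω H) k) (R : Finset G)
    (η : k →ₗ[k] IndCarrier ω H S1) : Prop :=
  (∀ g : G, ∃! r, r ∈ R ∧ g⁻¹ * r ∈ H) ∧ η 1 = ∑ r ∈ R, jgen ω H S1 r (1 : k)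

end Induced

/-! ### The coset algebra and classification data -/

section AH

variable (k : Type*) [Field k] {G : Type*} [Group G]

/-- The twisted action of `G` on functions on `G/H` : `(c·f)(x) = f(c⁻¹x)`. -/
def cosetAct (H : Subgroup G) (c : G) : ((G ⧸ H) → k) →ₗ[k] ((G ⧸ H) → k) :=
  LinearMap.funLeft k k fun x => c⁻¹ • x

/-- Basis element `e_n` of the twisted group algebra `B(N,κ,ε)`. -/
noncomputable def bGen {H : Type*} [Group H] (N : Subgroup H) (n : ↥N) : ↥N →₀ k :=
  Finsupp.single n 1

end AH

section ClassData

variable {H : Type*} [Group H] {M : Type*} [CommGroup M]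

/-- The conditions on the classification data `(N, κ, ε)` from Davydov–Simmons. -/
def ClassData (ω : H → H → H → M) (N : Subgroup H) (κ ε : H → H → M) : Prop :=
  (∀ n ∈ N, κ n 1 = 1 ∧ κ 1 n = 1) ∧
  (∀ n ∈ N, ∀ m ∈ N, ∀ l ∈ N,
      ω n m l = κ n m * (κ m l)⁻¹ * κ (n * m) l * (κ n (m * l))⁻¹) ∧
  (∀ h g : H, ∀ n ∈ N, tauc ω h g n = ε h (g * n * g⁻¹) * ε g n * (ε (h * g) n)⁻¹) ∧
  (∀ h : H, ∀ n ∈ N, ∀ m ∈ N,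
      gamc ω h n m
        = ε h (n * m) * (ε h n)⁻¹ * (ε h m)⁻¹ * κ (h * n * h⁻¹) (h * m * h⁻¹) * (κ n m)⁻¹) ∧
  ∀ n ∈ N, ∀ m ∈ N, κ (n * m * n⁻¹) n = ε n m * κ n m

end ClassData

section BStruct

variable {k : Type*} [Field k] {H : Type*} [Group H] [DecidableEq H]

/-- The twisted Yetter–Drinfeld structure of `B(N,κ,ε)`:
`e_n` has degree `n` and `h·e_n = ε_h(n) e_{hnh⁻¹}`. -/
def IsBStruct (ω : H → H → H → kˣ) (N : Subgroup H) (hN : N.Normal) (ε : H → H → kˣ)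
    (S : YDOn k ω (↥N →₀ k)) : Prop :=
  (∀ d : H, S.grading d = Submodule.span k {x | ∃ n : ↥N, ↑n = d ∧ x = bGen k N n}) ∧
  ∀ (h : H) (n : ↥N), S.act h (bGen k N n) =
    ((ε h ↑n : kˣ) : k) • bGen k N ⟨h * ↑n * h⁻¹, hN.conj_mem ↑n n.2 h⟩

/-- The multiplication of `B(N,κ,ε)`: `e_n e_m = κ(n,m)⁻¹ e_{nm}`. -/
def IsBMul (N : Subgroup H) (κ : H → H → kˣ)
    (mulB : (↥N →₀ k) ⊗[k] (↥N →₀ k) →ₗ[k] (↥N →₀ k)) : Prop :=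
  ∀ n m : ↥N, mulB (bGen k N n ⊗ₜ[k] bGen k N m) =
    (((κ ↑n ↑m)⁻¹ : kˣ) : k) • bGen k N (n * m)

end BStruct

/-! ### Algebras, étale algebras and Frobenius algebras in the category -/

section Algebras

variable {k : Type*} [Field k] {G : Type*} [Group G] [DecidableEq G] {ω : G → G → G → kˣ}
variable {M : Type*} [AddCommGroup M] [Module k M]

/-- `(M, mulM, uM)` is a connected étale (= connected commutative separable) algebra in
`Z(Vect_G^ω)`. -/
def IsConnectedEtale (T : YDOn k ω M) (mulM : M ⊗[k] M →ₗ[k] M) (uM : k →ₗ[k] M) : Prop :=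
  -- the multiplication is a morphism in the category
  (∃ Tt : YDOn k ω (M ⊗[k] M), IsTensorStruct T T Tt ∧ IsYDHom Tt T mulM) ∧
  -- the unit is a morphism in the category
  (uM 1 ∈ T.grading 1) ∧ (∀ g : G, T.act g (uM 1) = uM 1) ∧
  -- unitality
  (∀ x : M, mulM (uM 1 ⊗ₜ[k] x) = x ∧ mulM (x ⊗ₜ[k] uM 1) = x) ∧
  -- associativity (with respect to the associator of the category)
  (∃ a, IsAssocMap T T T a ∧
      mulM ∘ₗ TensorProduct.map mulM LinearMap.id
        = mulM ∘ₗ TensorProduct.map LinearMap.id mulM ∘ₗ a) ∧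
  -- commutativity
  (∃ c, IsBraidingMap T T c ∧ mulM ∘ₗ c = mulM) ∧
  -- separability
  (∃ (Δ' : M →ₗ[k] M ⊗[k] M) (Tt : YDOn k ω (M ⊗[k] M))
      (a : (M ⊗[k] M) ⊗[k] M →ₗ[k] M ⊗[k] (M ⊗[k] M))
      (a' : M ⊗[k] (M ⊗[k] M) →ₗ[k] (M ⊗[k] M) ⊗[k] M),
      IsTensorStruct T T Tt ∧ IsAssocMap T T T a ∧ IsAssocInvMap T T T a' ∧
      IsYDHom T Tt Δ' ∧ mulM ∘ₗ Δ' = LinearMap.id ∧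
      TensorProduct.map LinearMap.id mulM ∘ₗ a ∘ₗ TensorProduct.map Δ' LinearMap.id
        = Δ' ∘ₗ mulM ∧
      Δ' ∘ₗ mulM
        = TensorProduct.map mulM LinearMap.id ∘ₗ a' ∘ₗ TensorProduct.map LinearMap.id Δ') ∧
  -- connectedness : Hom(1, M) is one-dimensional
  Module.finrank k
    ↥(T.grading 1 ⊓ ⨅ g : G, LinearMap.eqLocus (T.act g) (LinearMap.id : M →ₗ[k] M)) = 1

/-- `(M, mulM, uM)` is a rigid Frobenius (= connected commutative special Frobenius)
algebra in `Z(Vect_G^ω)`. -/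
def IsRigidFrobenius (T : YDOn k ω M) (mulM : M ⊗[k] M →ₗ[k] M) (uM : k →ₗ[k] M) : Prop :=
  IsConnectedEtale T mulM uM ∧
  ∃ (Δ : M →ₗ[k] M ⊗[k] M) (εM : M →ₗ[k] k),
    -- Δ and ε are morphisms in the category
    (∃ Tt : YDOn k ω (M ⊗[k] M), IsTensorStruct T T Tt ∧ IsYDHom T Tt Δ) ∧
    (∀ g : G, εM ∘ₗ T.act g = εM) ∧ (∀ d : G, d ≠ 1 → ∀ v ∈ T.grading d, εM v = 0) ∧
    -- coassociativity and counitality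
    (∀ a, IsAssocMap T T T a →
        a ∘ₗ TensorProduct.map Δ LinearMap.id ∘ₗ Δ = TensorProduct.map LinearMap.id Δ ∘ₗ Δ) ∧
    (TensorProduct.lid k M).toLinearMap ∘ₗ TensorProduct.map εM LinearMap.id ∘ₗ Δ
      = LinearMap.id ∧
    (TensorProduct.rid k M).toLinearMap ∘ₗ TensorProduct.map LinearMap.id εM ∘ₗ Δ
      = LinearMap.id ∧
    -- the Frobenius compatibility
    (∀ a a', IsAssocMap T T T a → IsAssocInvMap T T T a' →
        TensorProduct.map mulM LinearMap.id ∘ₗ a' ∘ₗ TensorProduct.map LinearMap.id Δ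
          = Δ ∘ₗ mulM ∧
        Δ ∘ₗ mulM = TensorProduct.map LinearMap.id mulM ∘ₗ a ∘ₗ TensorProduct.map Δ LinearMap.id) ∧
    -- specialness
    (∃ β : k, β ≠ 0 ∧ mulM ∘ₗ Δ = β • LinearMap.id) ∧
    ∃ β1 : k, β1 ≠ 0 ∧ εM (uM 1) = β1

/-- `(V, ρ)` is a local right module over the commutative algebra `(A, mulA, u)`. -/
def IsLocModule {A V : Type*} [AddCommGroup A] [Module k A] [AddCommGroup V] [Module k V]
    (SA : YDOn k ω A) (mulA : A ⊗[k] A →ₗ[k] A) (u : A)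
    (SV : YDOn k ω V) (ρ : V →ₗ[k] A →ₗ[k] V) : Prop :=
  (∀ d e : G, ∀ v ∈ SV.grading d, ∀ a ∈ SA.grading e, ρ v a ∈ SV.grading (d * e)) ∧
  (∀ v : V, ρ v u = v) ∧
  (∀ (d e f : G) (v : V) (a b : A), v ∈ SV.grading d → a ∈ SA.grading e → b ∈ SA.grading f →
      ρ (ρ v a) b = (((ω d e f)⁻¹ : kˣ) : k) • ρ v (mulA (a ⊗ₜ[k] b))) ∧
  (∀ (h d e : G) (v : V) (a : A), v ∈ SV.grading d → a ∈ SA.grading e →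
      SV.act h (ρ v a) = ((gamc ω h d e : kˣ) : k) • ρ (SV.act h v) (SA.act h a)) ∧
  ∀ (d e : G) (v : V) (a : A), v ∈ SV.grading d → a ∈ SA.grading e →
    ρ v a = ρ (SV.act (d * e * d⁻¹) v) (SA.act d a)

/-- The submodule of `X ⊗ Y` which is divided out to form the relative tensor product
`X ⊗_A Y` over a commutative algebra `A` (the left action on `Y` is obtained from the
right action through the braiding). -/
def relLoc {A X Y : Type*} [AddCommGroup A] [Module k A] [AddCommGroup X] [Module k X]
    [AddCommGroup Y] [Module k Y]
    (SA : YDOn k ω A) (SY : YDOn k ω Y)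
    (ρX : X →ₗ[k] A →ₗ[k] X) (ρY : Y →ₗ[k] A →ₗ[k] Y) : Submodule k (X ⊗[k] Y) :=
  Submodule.span k
    {t | ∃ (e : G) (a : A) (x : X) (y : Y), a ∈ SA.grading e ∧
      t = ρX x a ⊗ₜ[k] y - x ⊗ₜ[k] ρY (SY.act e y) a}

end Algebras

end DW

open DW

/-!
`I(V)` is the quotient of `kG ⊗ V = G →₀ V` by the relations, and every operator it needs (the
action of `c`, the projection onto a degree) comes from a map `g ⊗ v_e ↦ φ(g,e) (σ g ⊗ v_e)` of
`kG ⊗ V`. Such a map preserves the relations once `σ (g h) = σ g h` and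
`φ(gh,d) τ(g,h)(d) = φ(g,hdh⁻¹) τ(σ g,h)(d)`; for the action this is the identity
`τ(a,b)(cdc⁻¹) τ(ab,c)(d) = τ(a,bc)(d) τ(b,c)(d)`, a consequence of four instances of the
3-cocycle condition. The projections make the grading independent, the homogeneous generators
`g ⊗ v_e` span, and the remaining axioms are checked on these generators.
-/

namespace DW

section Cocycle

variable {G : Type*} [Group G] {M : Type*} [CommGroup M] {ω : G → G → G → M}

theorem IsCocycle.tauc_mul_tauc (hω : IsCocycle ω) (a b c d : G) :
    tauc ω a b (c * d * c⁻¹) * tauc ω (a * b) c d = tauc ω a (b * c) d * tauc ω b c d := by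
  set x := c * d * c⁻¹
  set y := b * x * b⁻¹
  set z := a * y * a⁻¹
  have E1 := hω a b c d
  have E2 := hω z a b c
  have E3 := hω a y b c
  have E4 := hω a b x c
  rw [show z * a = a * y by simp only [z]; group] at E2
  rw [show y * b = b * x by simp only [y]; group] at E3
  rw [show x * c = c * d by simp only [x]; group] at E4
  simp only [tauc]
  rw [show a * b * x * (a * b)⁻¹ = z by simp only [x, y, z]; group,
    show a * b * c * d * (a * b * c)⁻¹ = z by simp only [x, y, z]; group,
    show a * (b * c) * d * (a * (b * c))⁻¹ = z by simp only [x, y, z]; group,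
    show b * c * d * (b * c)⁻¹ = y by simp only [x, y]; group]
  apply Additive.ofMul.injective
  apply_fun Additive.ofMul at E1 E2 E3 E4
  simp only [ofMul_mul, ofMul_inv] at *
  linear_combination (norm := abel) E1 - E2 + E3 - E4

theorem IsNormalized.tauc_one_left (hnorm : IsNormalized ω) (g d : G) : tauc ω 1 g d = 1 := by
  simp only [tauc, hnorm 1 g d (.inl rfl), hnorm _ 1 g (.inr (.inl rfl)),
    hnorm 1 _ g (.inl rfl), one_mul, inv_one, mul_one]

end Cocycle

end DW

namespace DirectSum.IsInternal

variable {R ι M : Type*} [CommSemiring R] [AddCommMonoid M] [Module R M] [DecidableEq ι]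
  {𝒜 : ι → Submodule R M}

noncomputable def smulComponents (h : IsInternal 𝒜) (f : ι → R) : M →ₗ[R] M :=
  toModule R ι M (fun i => f i • (𝒜 i).subtype) ∘ₗ
    (LinearEquiv.ofBijective (coeLinearMap 𝒜) h).symm.toLinearMap

theorem smulComponents_of_mem (h : IsInternal 𝒜) (f : ι → R) {i : ι} {v : M} (hv : v ∈ 𝒜 i) :
    h.smulComponents f v = f i • v := by
  have hv' : (LinearEquiv.ofBijective (coeLinearMap 𝒜) h).symm v = lof R ι _ i ⟨v, hv⟩ := by
    rw [LinearEquiv.symm_apply_eq]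
    exact (coeLinearMap_of 𝒜 i ⟨v, hv⟩).symm
  rw [smulComponents, LinearMap.comp_apply, LinearEquiv.coe_coe, hv', toModule_lof]
  rfl

end DirectSum.IsInternal

theorem Finsupp.span_single_mem_eq_top {R M α ι : Type*} [Semiring R] [AddCommMonoid M]
    [Module R M] {𝒜 : ι → Submodule R M} (h𝒜 : ⨆ i, 𝒜 i = ⊤) :
    Submodule.span R {x : α →₀ M | ∃ (a : α) (i : ι) (v : M), v ∈ 𝒜 i ∧ x = single a v} = ⊤ := by
  rw [eq_top_iff]
  rintro f -
  induction f using Finsupp.induction_linear with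
  | zero => exact Submodule.zero_mem _
  | add f g hf hg => exact Submodule.add_mem _ hf hg
  | single a v =>
    refine Submodule.iSup_induction 𝒜 (motive := fun v => single a v ∈ _)
      (h𝒜 ▸ Submodule.mem_top) (fun i v hv => Submodule.subset_span ⟨a, i, v, hv, rfl⟩) ?_ ?_
    · simpa only [single_zero] using Submodule.zero_mem _
    · intro v w hv hw
      simpa only [single_add] using Submodule.add_mem _ hv hw

theorem iSupIndep_of_projections {R M ι : Type*} [Semiring R] [AddCommMonoid M] [Module R M]
    {N : ι → Submodule R M} (π : ι → M →ₗ[R] M) (hπ_self : ∀ i, ∀ x ∈ N i, π i x = x)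
    (hπ_ne : ∀ i j, j ≠ i → N j ≤ LinearMap.ker (π i)) : iSupIndep N := by
  intro i
  rw [Submodule.disjoint_def]
  intro x hx hx'
  have hker : π i x = 0 := iSup₂_le (hπ_ne i) hx'
  rw [← hπ_self i x hx, hker]

namespace DW

section Compatible

variable {k : Type*} [Field k] {G : Type*} [Group G] {ω : G → G → G → kˣ} {H : Subgroup G}

variable (ω) in
def IsIndRelCompatible (σ : G → G) (φ : G → ↥H → k) : Prop :=
  (∀ g (h : ↥H), σ (g * h) = σ g * h) ∧
    ∀ g (h d : ↥H), φ (g * h) d * tauc ω g h d = φ g (h * d * h⁻¹) * tauc ω (σ g) h d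

theorem isIndRelCompatible_indicator [DecidableEq G] (d : G) :
    IsIndRelCompatible ω id fun g (e : ↥H) => if g * e * g⁻¹ = d then (1 : k) else 0 := by
  refine ⟨fun _ _ => rfl, fun g h e => ?_⟩
  dsimp only
  rw [show g * ((h * e * h⁻¹ : ↥H) : G) * g⁻¹ = g * h * e * (g * h)⁻¹ by push_cast; group,
    id, mul_comm]

theorem IsCocycle.isIndRelCompatible_tauc (hω : IsCocycle ω) (c : G) :
    IsIndRelCompatible ω (c * ·) fun g (e : ↥H) => ((tauc ω c g e : kˣ) : k) :=
  ⟨fun g h => (mul_assoc c g h).symm,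
    fun g h d => by dsimp only; exact_mod_cast (congrArg Units.val (hω.tauc_mul_tauc c g h d)).symm⟩

end Compatible

section Induced

variable {k : Type*} [Field k] {G : Type*} [Group G] [DecidableEq G]
  {ω : G → G → G → kˣ} {H : Subgroup G} {V : Type*} [AddCommGroup V] [Module k V]
  (S : YDOn k (resCocycle ω H) V)

noncomputable def twistedTranslate (σ : G → G) (φ : G → ↥H → k) : (G →₀ V) →ₗ[k] (G →₀ V) :=
  Finsupp.lsum k fun g => Finsupp.lsingle (σ g) ∘ₗ S.internal.smulComponents (φ g)

theorem twistedTranslate_single (σ : G → G) (φ : G → ↥H → k) (g : G) {e : ↥H} {v : V}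
    (hv : v ∈ S.grading e) :
    twistedTranslate S σ φ (Finsupp.single g v) = φ g e • Finsupp.single (σ g) v := by
  rw [twistedTranslate, Finsupp.lsum_single, LinearMap.comp_apply,
    S.internal.smulComponents_of_mem _ hv, Finsupp.lsingle_apply, Finsupp.smul_single]

theorem map_twistedTranslate_indRel_le {σ : G → G} {φ : G → ↥H → k}
    (hσφ : IsIndRelCompatible ω σ φ) :
    (indRel ω H S).map (twistedTranslate S σ φ) ≤ indRel ω H S := by
  rw [indRel, Submodule.map_span, Submodule.span_le]
  rintro _ ⟨_, ⟨g, h, d, v, hv, rfl⟩, rfl⟩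
  have hcoeff : ((tauc ω g h d)⁻¹ : kˣ) * φ g (h * d * h⁻¹)
      = φ (g * h) d * ((tauc ω (σ g) h d)⁻¹ : kˣ) := by
    simp only [Units.val_inv_eq_inv_val]
    field_simp
    linear_combination (hσφ.2 g h d).symm
  rw [map_sub, map_smul, twistedTranslate_single S σ φ _ hv,
    twistedTranslate_single S σ φ _ (S.act_mem h d v hv), smul_smul, hcoeff, ← smul_smul,
    ← smul_sub, hσφ.1]
  exact Submodule.smul_mem _ _ (Submodule.subset_span ⟨σ g, h, d, v, hv, rfl⟩)

noncomputable def indMap {σ : G → G} {φ : G → ↥H → k} (hσφ : IsIndRelCompatible ω σ φ) :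
    IndCarrier ω H S →ₗ[k] IndCarrier ω H S :=
  Submodule.mapQ _ _ (twistedTranslate S σ φ)
    (Submodule.map_le_iff_le_comap.mp (map_twistedTranslate_indRel_le S hσφ))

theorem indMap_jgen {σ : G → G} {φ : G → ↥H → k} (hσφ : IsIndRelCompatible ω σ φ)
    (g : G) {e : ↥H} {v : V} (hv : v ∈ S.grading e) :
    indMap S hσφ (jgen ω H S g v) = φ g e • jgen ω H S (σ g) v := by
  rw [jgen, indMap, Submodule.mapQ_apply, twistedTranslate_single S σ φ g hv]
  rfl

theorem span_jgen_mem_eq_top :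
    Submodule.span k {x | ∃ (g : G) (e : ↥H) (v : V), v ∈ S.grading e ∧ x = jgen ω H S g v}
      = ⊤ := by
  rw [← Submodule.range_mkQ (indRel ω H S), LinearMap.range_eq_map,
    ← Finsupp.span_single_mem_eq_top S.internal.submodule_iSup_eq_top, Submodule.map_span]
  congr 1
  ext x
  constructor
  · rintro ⟨g, e, v, hv, rfl⟩
    exact ⟨_, ⟨g, e, v, hv, rfl⟩, rfl⟩
  · rintro ⟨_, ⟨g, e, v, hv, rfl⟩, rfl⟩
    exact ⟨g, e, v, hv, rfl⟩

theorem IndCarrier.linearMap_ext {N : Type*} [AddCommGroup N] [Module k N]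
    {f f' : IndCarrier ω H S →ₗ[k] N}
    (h : ∀ (g : G) (e : ↥H) (v : V), v ∈ S.grading e → f (jgen ω H S g v) = f' (jgen ω H S g v)) :
    f = f' :=
  LinearMap.ext_on (span_jgen_mem_eq_top S) (by rintro _ ⟨g, e, v, hv, rfl⟩; exact h g e v hv)

variable (ω H) in
noncomputable def indGrading (d : G) : Submodule k (IndCarrier ω H S) :=
  Submodule.span k
    {x | ∃ (g : G) (e : ↥H) (v : V), v ∈ S.grading e ∧ g * ↑e * g⁻¹ = d ∧ x = jgen ω H S g v}

theorem jgen_mem_indGrading (g : G) {e : ↥H} {v : V} (hv : v ∈ S.grading e) :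
    jgen ω H S g v ∈ indGrading ω H S (g * e * g⁻¹) :=
  Submodule.subset_span ⟨g, e, v, hv, rfl, rfl⟩

theorem iSup_indGrading_eq_top : ⨆ d, indGrading ω H S d = ⊤ := by
  rw [eq_top_iff, ← span_jgen_mem_eq_top S, Submodule.span_le]
  rintro _ ⟨g, e, v, hv, rfl⟩
  exact Submodule.mem_iSup_of_mem _ (jgen_mem_indGrading S g hv)

variable (ω) in
noncomputable def indProj (d : G) : IndCarrier ω H S →ₗ[k] IndCarrier ω H S :=
  indMap S (isIndRelCompatible_indicator d)

theorem indProj_jgen (d g : G) {e : ↥H} {v : V} (hv : v ∈ S.grading e) :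
    indProj ω S d (jgen ω H S g v) = if g * e * g⁻¹ = d then jgen ω H S g v else 0 := by
  rw [indProj, indMap_jgen S _ g hv, ite_smul, one_smul, zero_smul, id]

theorem iSupIndep_indGrading : iSupIndep (indGrading ω H S) := by
  refine iSupIndep_of_projections (indProj ω S) (fun d => ?_) (fun d d' hne => ?_)
  · refine LinearMap.eqOn_span (f := indProj ω S d) (g := LinearMap.id) ?_
    rintro _ ⟨g, e, v, hv, rfl, rfl⟩
    rw [indProj_jgen S _ g hv, if_pos rfl, LinearMap.id_apply]
  · rw [indGrading, Submodule.span_le]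
    rintro _ ⟨g, e, v, hv, rfl, rfl⟩
    rw [SetLike.mem_coe, LinearMap.mem_ker, indProj_jgen S _ g hv, if_neg hne]

theorem isInternal_indGrading : DirectSum.IsInternal (indGrading ω H S) :=
  (DirectSum.isInternal_submodule_iff_iSupIndep_and_iSup_eq_top _).2
    ⟨iSupIndep_indGrading S, iSup_indGrading_eq_top S⟩

noncomputable def indAct (hω : IsCocycle ω) (c : G) : IndCarrier ω H S →ₗ[k] IndCarrier ω H S :=
  indMap S (hω.isIndRelCompatible_tauc c)

theorem indAct_jgen (hω : IsCocycle ω) (c g : G) {e : ↥H} {v : V} (hv : v ∈ S.grading e) :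
    indAct S hω c (jgen ω H S g v) = ((tauc ω c g e : kˣ) : k) • jgen ω H S (c * g) v :=
  indMap_jgen S _ g hv

theorem indAct_one (hω : IsCocycle ω) (hnorm : IsNormalized ω) :
    indAct S hω 1 = LinearMap.id :=
  IndCarrier.linearMap_ext S fun g e v hv => by
    rw [indAct_jgen S hω 1 g hv, hnorm.tauc_one_left, Units.val_one, one_smul, one_mul,
      LinearMap.id_apply]

theorem indAct_mem_indGrading (hω : IsCocycle ω) (c d : G) {x : IndCarrier ω H S}
    (hx : x ∈ indGrading ω H S d) : indAct S hω c x ∈ indGrading ω H S (c * d * c⁻¹) := by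
  refine (Submodule.span_le.2 ?_ :
    indGrading ω H S d ≤ (indGrading ω H S _).comap (indAct S hω c)) hx
  rintro _ ⟨g, e, v, hv, rfl, rfl⟩
  rw [SetLike.mem_coe, Submodule.mem_comap, indAct_jgen S hω c g hv,
    show c * (g * e * g⁻¹) * c⁻¹ = c * g * e * (c * g)⁻¹ by group]
  exact Submodule.smul_mem _ _ (jgen_mem_indGrading S (c * g) hv)

theorem indAct_indAct (hω : IsCocycle ω) (a b d : G) {x : IndCarrier ω H S}
    (hx : x ∈ indGrading ω H S d) :
    indAct S hω a (indAct S hω b x) = ((tauc ω a b d : kˣ) : k) • indAct S hω (a * b) x := by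
  refine LinearMap.eqOn_span (f := indAct S hω a ∘ₗ indAct S hω b)
    (g := ((tauc ω a b d : kˣ) : k) • indAct S hω (a * b)) ?_ hx
  rintro _ ⟨g, e, v, hv, rfl, rfl⟩
  simp only [LinearMap.comp_apply, LinearMap.smul_apply, indAct_jgen S hω _ _ hv, map_smul,
    smul_smul, ← mul_assoc a b g]
  congr 1
  rw [mul_comm]
  exact_mod_cast congrArg Units.val (hω.tauc_mul_tauc a b g e).symm

variable (ω) in
noncomputable def indYD (hω : IsCocycle ω) (hnorm : IsNormalized ω) :
    YDOn k ω (IndCarrier ω H S) where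
  grading := indGrading ω H S
  internal := isInternal_indGrading S
  act := indAct S hω
  act_one := indAct_one S hω hnorm
  act_mem g d _ hv := indAct_mem_indGrading S hω g d hv
  act_act h g d _ hv := indAct_indAct S hω h g d hv

end Induced

end DW

theorem induced_welldefined_general {k : Type*} [Field k] {G : Type*} [Group G]
    [DecidableEq G] (ω : G → G → G → kˣ)
    (hω : IsCocycle ω) (hnorm : IsNormalized ω) (H : Subgroup G)
    (V : Type*) [AddCommGroup V] [Module k V] (S : YDOn k (resCocycle ω H) V) :
    ∃ T : YDOn k ω (IndCarrier ω H S), IsIndStruct ω H S T :=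
  ⟨indYD ω S hω hnorm, fun _ => rfl, fun c g _ _ hv => indAct_jgen S hω c g hv⟩

/-- Lemma 3.7: for a subgroup `H ≤ G` and a twisted Yetter–Drinfeld module
`V` over `(H, ω|_H)`, the induced space `I(V) = kG ⊗ V` modulo the relations
`g h ⊗ v_d = τ(g,h)(d)⁻¹ g ⊗ (h·v_d)` carries a well-defined twisted Yetter–Drinfeld module
structure over `(G, ω)`, with `deg (g ⊗ v_d) = g d g⁻¹` and
`c ⊳ (g ⊗ v_d) = τ(c,g)(d) (cg ⊗ v_d)`. -/
theorem induced_welldefined {k : Type*} [Field k] [IsAlgClosed k] {G : Type*} [Group G]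
    [Finite G] [DecidableEq G] (ω : G → G → G → kˣ)
    (hω : IsCocycle ω) (hnorm : IsNormalized ω) (H : Subgroup G)
    (V : Type*) [AddCommGroup V] [Module k V] (S : YDOn k (resCocycle ω H) V) :
    ∃ T : YDOn k ω (IndCarrier ω H S), IsIndStruct ω H S T :=
  induced_welldefined_general ω hω hnorm H V S
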